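/- arXiv:2602.06068 — 14 statements merged into one kernel-verified Lean document; each statement's English description precedes it below -/
import Mathlib

section
/- For all integers n ≥ 0, ∑_{k=0}^n 4^k / C(2k,k) = (1/3)((n+1)·2^{2n+1}/C(2n,n) + 1). -/
open Finset BigOperators

theorem stmt0 (n : ℕ) :
    ∑ k ∈ Finset.range (n+1), (4:ℚ)^k / (Nat.choose (2*k) k) =
      (1/3) * ((n+1) * 2^(2*n+1) / (Nat.choose (2*n) n) + 1) := by
  induction n with
  | zero => norm_num
  | succ n ih =>
    rw [Finset.sum_range_succ, ih]
    have hc : ∀ m : ℕ, ((Nat.choose (2*m) m : ℚ)) ≠ 0 := by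
      intro m
      exact Nat.cast_ne_zero.mpr (Nat.choose_pos (by omega)).ne'
    have key : ((n:ℚ)+1) * (Nat.choose (2*(n+1)) (n+1)) = 2*(2*n+1) * (Nat.choose (2*n) n) := by
      have := Nat.succ_mul_centralBinom_succ n
      have : ((n+1) * Nat.centralBinom (n+1) : ℚ) = (2*(2*n+1) * Nat.centralBinom n : ℚ) := by
        exact_mod_cast congrArg (Nat.cast : ℕ → ℚ) this
      simpa [Nat.centralBinom, mul_comm, mul_assoc, mul_left_comm] using this
    have h1 := hc n
    have h2 := hc (n+1)
    field_simp
    have h4 : (4:ℚ)^(n+1) = 2^(2*(n+1)) := by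
      rw [show (4:ℚ) = 2^2 by norm_num, ← pow_mul]
    rw [h4]
    push_cast
    linear_combination ((2:ℚ)^(2*n+1)) * key
end

section
/- For all integers m, n ≥ 0, ∑_{k=0}^n 4^k · C(m+k,k)/C(2k,k) = (1/(2m+3))·((m+n+1)·C(m+n,n)/C(2n,n)·2^{2n+1} + 1). -/
open Finset BigOperators

theorem stmt1 (m n : ℕ) :
    ∑ k ∈ Finset.range (n+1), (4:ℚ)^k * (Nat.choose (m+k) k) / (Nat.choose (2*k) k) =
      (1/(2*m+3)) * ((m+n+1) * (Nat.choose (m+n) n) / (Nat.choose (2*n) n) * 2^(2*n+1) + 1) := by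
  induction n with
  | zero =>
    have hm : (2*(m:ℚ)+3) ≠ 0 := by positivity
    simp [Nat.choose]
    field_simp
    ring
  | succ n ih =>
    rw [Finset.sum_range_succ, ih]
    have hb : (Nat.choose (2*n) n : ℚ) ≠ 0 := by
      exact Nat.cast_ne_zero.mpr (Nat.choose_pos (by omega)).ne'
    have hb2 : (Nat.choose (2*(n+1)) (n+1) : ℚ) ≠ 0 :=
      Nat.cast_ne_zero.mpr (Nat.choose_pos (by omega)).ne'
    have hn1 : ((n:ℚ)+1) ≠ 0 := by positivity
    have hm : (2*(m:ℚ)+3) ≠ 0 := by positivity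
    have h1 : (Nat.choose (m+(n+1)) (n+1) : ℚ) * ((n:ℚ)+1) = ((m:ℚ)+n+1) * (Nat.choose (m+n) n) := by
      have := Nat.add_one_mul_choose_eq (m+n) n
      have : ((m+n).succ * Nat.choose (m+n) n : ℚ) = (Nat.choose (m+n+1) (n+1) * (n+1) : ℕ) := by
        exact_mod_cast congrArg (Nat.cast : ℕ → ℚ) this
      push_cast at this
      have he : m + (n+1) = m + n + 1 := by ring
      rw [he]
      linarith [this]
    have h2 : (Nat.choose (2*(n+1)) (n+1) : ℚ) * ((n:ℚ)+1) = 2*(2*(n:ℚ)+1) * (Nat.choose (2*n) n) := by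
      have hs : Nat.choose (2*(n+1)) (n+1) = 2 * Nat.choose (2*n+1) (n+1) := by
        have : 2*(n+1) = (2*n+1)+1 := by ring
        rw [this, Nat.choose_succ_succ]
        have hsym := Nat.choose_symm (show n+1 ≤ 2*n+1 by omega)
        have : 2*n+1-(n+1) = n := by omega
        rw [this] at hsym
        simp only [Nat.succ_eq_add_one] at hsym ⊢
        omega
      have h3 := Nat.add_one_mul_choose_eq (2*n) n
      have h3' : ((2*n).succ * Nat.choose (2*n) n : ℚ) = (Nat.choose (2*n+1) (n+1) * (n+1) : ℕ) := by
        exact_mod_cast congrArg (Nat.cast : ℕ → ℚ) h3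
      push_cast [hs] at *
      nlinarith [h3']
    have e1 : (Nat.choose (m+(n+1)) (n+1) : ℚ) = ((m:ℚ)+n+1) * (Nat.choose (m+n) n) / ((n:ℚ)+1) := by
      field_simp; linarith [h1]
    have e2 : (Nat.choose (2*(n+1)) (n+1) : ℚ) = 2*(2*(n:ℚ)+1) * (Nat.choose (2*n) n) / ((n:ℚ)+1) := by
      field_simp; linarith [h2]
    rw [e1, e2]
    have h2n1 : (2*(n:ℚ)+1) ≠ 0 := by positivity
    have ha : (2:ℚ)^(2*(n+1)+1) = 4^n*8 := by
      have : 2*(n+1)+1 = 2*n+3 := by ring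
      rw [this, pow_add, pow_mul]; norm_num
    have hc : (2:ℚ)^(2*n+1) = 4^n*2 := by rw [pow_add, pow_mul]; norm_num
    rw [ha, hc]
    have h4 : (4:ℚ)^n ≠ 0 := by positivity
    field_simp
    push_cast
    ring
end

section
/- For all integers n ≥ 0, ∑_{k=0}^n (4^k / C(2k,k))·H_k = -2/9 + (2^{2n+1}/(3·C(2n,n)))·((n+1)·H_n - (2n-1)/3). -/
open Finset BigOperators

def H (n : ℕ) : ℚ := ∑ j ∈ Finset.range n, 1/(j+1)

theorem stmt2 (n : ℕ) :
    ∑ k ∈ Finset.range (n+1), (4:ℚ)^k / (Nat.choose (2*k) k) * H k =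
      -2/9 + (2^(2*n+1) / (3 * (Nat.choose (2*n) n))) * ((n+1) * H n - (2*(n:ℚ)-1)/3) := by
  induction n with
  | zero => simp [H]; norm_num
  | succ n ih =>
    have hH : H (n+1) = H n + 1/(n+1) := by simp [H, Finset.sum_range_succ]
    rw [Finset.sum_range_succ, ih, hH]
    have key : ((n:ℕ)+1) * Nat.centralBinom (n+1) = 2 * (2*n+1) * Nat.centralBinom n :=
      Nat.succ_mul_centralBinom_succ n
    have ha : (0:ℚ) < (Nat.centralBinom n : ℚ) := by
      exact_mod_cast Nat.centralBinom_pos n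
    have e1 : (Nat.choose (2*n) n : ℚ) = (Nat.centralBinom n : ℚ) := by
      rw [Nat.centralBinom]
    have hn1 : ((n:ℚ)+1) ≠ 0 := by positivity
    have hbval : ((Nat.choose (2*(n+1)) (n+1) : ℕ) : ℚ)
        = 2 * (2*(n:ℚ)+1) * (Nat.centralBinom n : ℚ) / ((n:ℚ)+1) := by
      rw [eq_div_iff hn1]
      have : ((Nat.choose (2*(n+1)) (n+1) : ℕ) : ℚ) = (Nat.centralBinom (n+1) : ℚ) := by
        rw [Nat.centralBinom]
      rw [this]
      rw [mul_comm]
      exact_mod_cast key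
    rw [e1, hbval]
    have h2 : (2:ℚ)*(2*(n:ℚ)+1) ≠ 0 := by positivity
    have hfour : (4:ℚ)^(n+1) = 2^(2*(n+1)) := by
      rw [pow_mul]; norm_num
    have htwo : (2:ℚ)^(2*(n+1)+1) = 2 * 2^(2*(n+1)) := by ring
    have htwo2 : (2:ℚ)^(2*n+1) = 2^(2*(n+1)) / 2 := by
      rw [show 2*(n+1) = (2*n+1)+1 by ring, pow_succ]; ring
    push_cast
    rw [hfour, htwo, htwo2]
    field_simp
    ring
end

section
/- For all integers n ≥ 0, ∑_{k=0}^n (4^k / C(2k,k))·H_{2k} = 1/9 + (4^n/(3·C(2n,n)))·(2(n+1)·H_{2n} - (4n+1)/3). -/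
open Finset BigOperators

lemma Hsucc (n : ℕ) : H (n+1) = H n + 1/(n+1) := by
  simp [H, Finset.sum_range_succ]

lemma choose_succ (n : ℕ) : ((Nat.choose (2*(n+1)) (n+1) : ℚ)) * (n+1) = 2 * (2*n+1) * (Nat.choose (2*n) n) := by
  have h1 : (2*n+1) * Nat.choose (2*n) n = Nat.choose (2*n+1) (n+1) * (n+1) :=
    Nat.add_one_mul_choose_eq (2*n) n
  have hs : Nat.choose (2*n+1) n = Nat.choose (2*n+1) (n+1) := by
    rw [← Nat.choose_symm (by omega : n ≤ 2*n+1)]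
    congr 1; omega
  have h2 : Nat.choose (2*n+2) (n+1) = 2 * Nat.choose (2*n+1) (n+1) := by
    rw [Nat.choose_succ_succ (2*n+1) n]; simp only [Nat.succ_eq_add_one]; omega
  have h : Nat.choose (2*(n+1)) (n+1) * (n+1) = 2 * ((2*n+1) * Nat.choose (2*n) n) := by
    have e : 2*(n+1) = 2*n+2 := by ring
    rw [e, h2, h1]; ring
  have hq := congrArg (Nat.cast : ℕ → ℚ) h
  push_cast at hq
  linarith

theorem stmt3 (n : ℕ) :
    ∑ k ∈ Finset.range (n+1), (4:ℚ)^k / (Nat.choose (2*k) k) * H (2*k) =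
      1/9 + ((4:ℚ)^n / (3 * (Nat.choose (2*n) n))) * (2*(n+1) * H (2*n) - (4*(n:ℚ)+1)/3) := by
  induction n with
  | zero => norm_num [H]
  | succ n ih =>
    rw [Finset.sum_range_succ, ih]
    have hc : ((Nat.choose (2*n) n : ℚ)) ≠ 0 := by
      exact_mod_cast (Nat.choose_pos (by omega)).ne'
    have hn1 : ((n:ℚ)+1) ≠ 0 := by positivity
    have hC' : ((Nat.choose (2*(n+1)) (n+1) : ℚ)) = 2*(2*n+1)*(Nat.choose (2*n) n) / (n+1) := by
      rw [eq_div_iff hn1]; exact_mod_cast choose_succ n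
    have hH : H (2*(n+1)) = H (2*n) + 1/(2*n+1) + 1/(2*n+2) := by
      have e : 2*(n+1) = (2*n+1)+1 := by ring
      rw [e, Hsucc, Hsucc]
      push_cast; ring
    rw [hH, hC']
    have h21 : ((2:ℚ)*n+1) ≠ 0 := by positivity
    have h22 : ((2:ℚ)*n+2) ≠ 0 := by positivity
    field_simp
    push_cast
    ring
end

section
/- For all integers n ≥ 0, ∑_{k=0}^n (4^k / C(2k,k))·O_k = 2/9 + (2/9)·(4^n/C(2n,n))·(n+1)·(3·O_n - 1). -/
open Finset BigOperators

def O (n : ℕ) : ℚ := ∑ j ∈ Finset.range n, 1/(2*j+1)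

theorem stmt4 (n : ℕ) :
    ∑ k ∈ Finset.range (n+1), (4:ℚ)^k / (Nat.choose (2*k) k) * O k =
      2/9 + (2/9) * ((4:ℚ)^n / (Nat.choose (2*n) n)) * (n+1) * (3 * O n - 1) := by
  induction n with
  | zero => simp [O]
  | succ n ih =>
    rw [Finset.sum_range_succ, ih]
    have hkey : ((n:ℚ)+1) * (Nat.choose (2*(n+1)) (n+1) : ℚ)
        = 2 * (2*(n:ℚ)+1) * (Nat.choose (2*n) n : ℚ) := by
      have := Nat.succ_mul_centralBinom_succ n
      simp only [Nat.centralBinom] at this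
      have h2 : ((n+1) * Nat.choose (2*(n+1)) (n+1) : ℚ)
          = ((2 * (2*n+1) * Nat.choose (2*n) n : ℕ) : ℚ) := by
        exact_mod_cast congrArg (Nat.cast : ℕ → ℚ) this
      push_cast at h2
      linarith
    have hC : (Nat.choose (2*n) n : ℚ) ≠ 0 := by
      exact_mod_cast (Nat.choose_pos (by omega)).ne'
    have hC' : (Nat.choose (2*(n+1)) (n+1) : ℚ) ≠ 0 := by
      exact_mod_cast (Nat.choose_pos (by omega)).ne'
    have hO : O (n+1) = O n + 1/(2*(n:ℚ)+1) := by
      simp [O, Finset.sum_range_succ]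
    have h2n1 : (2*(n:ℚ)+1) ≠ 0 := by positivity
    have hn1 : ((n:ℚ)+1) ≠ 0 := by positivity
    have hC'eq : (Nat.choose (2*(n+1)) (n+1) : ℚ)
        = 2 * (2*(n:ℚ)+1) * (Nat.choose (2*n) n : ℚ) / ((n:ℚ)+1) := by
      field_simp
      linarith [hkey]
    rw [hO]
    push_cast at hC'eq ⊢
    rw [hC'eq]
    field_simp
    ring
end

section
/- For all integers n ≥ 0, ∑_{k=0}^n (4^k / C(2k,k))·C(n+k,k)·H_{n+k} = (2^{2n+1}/(2n+3))·((2n+1)·H_{2n} - (2n-1)/(2n+3)) + (1/(2n+3))·(H_n - 2/(2n+3)). -/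
open Finset BigOperators

noncomputable def A (n k : ℕ) : ℚ :=
  (4:ℚ)^k / (Nat.choose (2*k) k) * (Nat.choose (n+k) k)

lemma central_ne (k : ℕ) : ((Nat.choose (2*k) k : ℕ) : ℚ) ≠ 0 :=
  Nat.cast_ne_zero.mpr (Nat.choose_pos (by omega)).ne'

lemma A_zero (n : ℕ) : A n 0 = 1 := by simp [A]

lemma H_succ (m : ℕ) : H (m+1) = H m + 1/((m:ℚ)+1) := by
  simp [H, Finset.sum_range_succ]

lemma ratio (n k : ℕ) :
    (2*(k:ℚ)+1) * A n (k+1) = 2*((n:ℚ)+(k:ℚ)+1) * A n k := by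
  have h1 : (k+1) * Nat.choose (2*(k+1)) (k+1) = 2*(2*k+1) * Nat.choose (2*k) k := by
    have := Nat.succ_mul_centralBinom_succ k
    simpa [Nat.centralBinom, mul_comm, mul_assoc, mul_left_comm, Nat.mul_succ,
      two_mul] using this
  have h2 : Nat.choose (n+k+1) (k+1) * (k+1) = (n+k+1) * Nat.choose (n+k) k :=
    (Nat.add_one_mul_choose_eq (n+k) k).symm
  have hc1 : ((Nat.choose (2*k) k : ℕ) : ℚ) ≠ 0 := central_ne k
  have hk : ((k:ℚ)+1) ≠ 0 := by positivity
  have h1q : ((Nat.choose (2*(k+1)) (k+1) : ℕ) : ℚ) =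
      2*(2*(k:ℚ)+1) * (Nat.choose (2*k) k) / ((k:ℚ)+1) := by
    rw [eq_div_iff hk]
    have : (((k+1) * Nat.choose (2*(k+1)) (k+1) : ℕ) : ℚ)
        = ((2*(2*k+1) * Nat.choose (2*k) k : ℕ) : ℚ) := by exact_mod_cast h1
    push_cast at this
    linarith [this]
  have h2q : ((Nat.choose (n+(k+1)) (k+1) : ℕ) : ℚ) =
      ((n:ℚ)+(k:ℚ)+1) * (Nat.choose (n+k) k) / ((k:ℚ)+1) := by
    rw [eq_div_iff hk]
    have : ((Nat.choose (n+k+1) (k+1) * (k+1) : ℕ) : ℚ)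
        = (((n+k+1) * Nat.choose (n+k) k : ℕ) : ℚ) := by exact_mod_cast h2
    push_cast at this
    have e : n+(k+1) = n+k+1 := by omega
    rw [e]
    linarith [this]
  unfold A
  rw [h1q, h2q]
  have h21 : (2*(k:ℚ)+1) ≠ 0 := by positivity
  field_simp
  ring

lemma A_top (n : ℕ) : A n (n+1) = 2^(2*n+1) := by
  have h : Nat.choose (2*(n+1)) (n+1) = 2 * Nat.choose (n+(n+1)) (n+1) := by
    rw [show n+(n+1) = n+n+1 by omega, show 2*(n+1) = (n+n+1)+1 by ring,
      Nat.choose_succ_succ]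
    have := Nat.choose_symm (n := n+n+1) (k := n) (by omega)
    rw [show n+n+1-n = n+1 by omega] at this
    simp only [Nat.succ_eq_add_one]
    omega
  have hc : ((Nat.choose (n+(n+1)) (n+1) : ℕ) : ℚ) ≠ 0 :=
    Nat.cast_ne_zero.mpr (Nat.choose_pos (by omega)).ne'
  unfold A
  rw [h]
  push_cast
  rw [show ((4:ℚ)^(n+1)) = 2^(2*n+2) by
    rw [show (4:ℚ) = 2^2 by norm_num, ← pow_mul]; ring_nf]
  field_simp
  ring

lemma f_step (n k : ℕ) :
    (2*((k:ℚ)+1)-1) * A n (k+1) * H (n+(k+1)) - (2*(k:ℚ)-1) * A n k * H (n+k)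
      = (2*(n:ℚ)+3) * (A n k * H (n+k)) + 2 * A n k := by
  have hH : H (n+(k+1)) = H (n+k) + 1/((n:ℚ)+(k:ℚ)+1) := by
    rw [show n+(k+1) = (n+k)+1 by omega, H_succ]
    push_cast
    ring
  have hr := ratio n k
  have hne : ((n:ℚ)+(k:ℚ)+1) ≠ 0 := by positivity
  rw [hH]
  field_simp
  linear_combination (H (n+k) * ((n:ℚ)+(k:ℚ)+1) + 1) * hr

lemma g_step (n k : ℕ) :
    (2*((k:ℚ)+1)-1) * A n (k+1) - (2*(k:ℚ)-1) * A n k = (2*(n:ℚ)+3) * A n k := by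
  linear_combination ratio n k

theorem stmt5 (n : ℕ) :
    ∑ k ∈ Finset.range (n+1), (4:ℚ)^k / (Nat.choose (2*k) k) * (Nat.choose (n+k) k) * H (n+k) =
      (2^(2*n+1) / (2*(n:ℚ)+3)) * ((2*(n:ℚ)+1) * H (2*n) - (2*(n:ℚ)-1)/(2*(n:ℚ)+3))
        + (1/(2*(n:ℚ)+3)) * (H n - 2/(2*(n:ℚ)+3)) := by
  have hL : ∑ k ∈ Finset.range (n+1),
      (4:ℚ)^k / (Nat.choose (2*k) k) * (Nat.choose (n+k) k) * H (n+k)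
      = ∑ k ∈ Finset.range (n+1), A n k * H (n+k) :=
    Finset.sum_congr rfl fun k _ => rfl
  rw [hL]
  set L := ∑ k ∈ Finset.range (n+1), A n k * H (n+k) with hLdef
  set S := ∑ k ∈ Finset.range (n+1), A n k with hSdef
  have hf := Finset.sum_range_sub (fun k : ℕ => (2*(k:ℚ)-1) * A n k * H (n+k)) (n+1)
  have hg := Finset.sum_range_sub (fun k : ℕ => (2*(k:ℚ)-1) * A n k) (n+1)
  have hfL : ∑ k ∈ Finset.range (n+1),
      ((2*((k+1:ℕ):ℚ)-1) * A n (k+1) * H (n+(k+1)) - (2*(k:ℚ)-1) * A n k * H (n+k))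
      = (2*(n:ℚ)+3) * L + 2 * S := by
    rw [hLdef, hSdef, Finset.mul_sum, Finset.mul_sum, ← Finset.sum_add_distrib]
    refine Finset.sum_congr rfl fun k _ => ?_
    push_cast
    exact f_step n k
  have hgS : ∑ k ∈ Finset.range (n+1),
      ((2*((k+1:ℕ):ℚ)-1) * A n (k+1) - (2*(k:ℚ)-1) * A n k) = (2*(n:ℚ)+3) * S := by
    rw [hSdef, Finset.mul_sum]
    refine Finset.sum_congr rfl fun k _ => ?_
    push_cast
    exact g_step n k
  rw [hfL] at hf
  rw [hgS] at hg
  have hA0 : A n 0 = 1 := A_zero n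
  have hAt : A n (n+1) = 2^(2*n+1) := A_top n
  have hHt : H (n+(n+1)) = H (2*n) + 1/(2*(n:ℚ)+1) := by
    rw [show n+(n+1) = 2*n+1 by omega, H_succ]
    push_cast
    ring
  rw [hA0, hAt, hHt, show n+0 = n from rfl] at hf
  rw [hA0, hAt] at hg
  push_cast at hf hg
  have h3 : (2*(n:ℚ)+3) ≠ 0 := by positivity
  have h1 : (2*(n:ℚ)+1) ≠ 0 := by positivity
  have hS : S = ((2*(n:ℚ)+1) * 2^(2*n+1) + 1) / (2*(n:ℚ)+3) := by
    rw [eq_div_iff h3]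
    linear_combination hg
  rw [hS] at hf
  have hLval : L = ((2*(n:ℚ)+1) * 2^(2*n+1) * (H (2*n) + 1/(2*(n:ℚ)+1))
      + H n
      - 2 * (((2*(n:ℚ)+1) * 2^(2*n+1) + 1) / (2*(n:ℚ)+3))) / (2*(n:ℚ)+3) := by
    rw [eq_div_iff h3]
    field_simp at hf ⊢
    apply mul_left_cancel₀ h1
    linear_combination hf
  rw [hLval]
  field_simp
  ring
end

section
/- For all integers n ≥ 0, ∑_{k=0}^n (2k+1)·O_{k+1} = (1/4)·((2n+1)(2n+3)·O_{n+1} - (n-1)(n+1)). -/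
open Finset BigOperators

lemma O_succ (n : ℕ) : O (n+1) = O n + 1/(2*(n:ℚ)+1) := by
  simp [O, Finset.sum_range_succ]

theorem stmt6 (n : ℕ) :
    ∑ k ∈ Finset.range (n+1), (2*(k:ℚ)+1) * O (k+1) =
      (1/4) * ((2*(n:ℚ)+1)*(2*(n:ℚ)+3) * O (n+1) - ((n:ℚ)-1)*((n:ℚ)+1)) := by
  induction n with
  | zero => simp [O]; norm_num
  | succ n ih =>
      rw [Finset.sum_range_succ, ih, O_succ (n+1)]
      have h : (2*(n:ℚ)+3) ≠ 0 := by positivity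
      push_cast
      field_simp
      ring
end

section
/- For every positive integer n, ∑_{k=1}^n (4^k / C(2k,k))·k = (1/15)·((3n+1)(n+1)·2^{2n+1}/C(2n,n) - 2). -/
open Finset BigOperators

theorem stmt9 (n : ℕ) (hn : 0 < n) :
    ∑ k ∈ Finset.Icc 1 n, (4:ℚ)^k / (Nat.choose (2*k) k) * k =
      (1/15) * ((3*(n:ℚ)+1)*((n:ℚ)+1) * 2^(2*n+1) / (Nat.choose (2*n) n) - 2) := by
  induction n with
  | zero => exact absurd hn (lt_irrefl 0)
  | succ n ih =>
    rcases Nat.eq_zero_or_pos n with h0 | hpos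
    · subst h0; norm_num
    · rw [Finset.sum_Icc_succ_top (by omega : 1 ≤ n + 1), ih hpos]
      have h1 : ((Nat.choose (2*n) n : ℚ)) ≠ 0 :=
        Nat.cast_ne_zero.mpr (Nat.choose_pos (by omega)).ne'
      have hn1 : ((n:ℚ) + 1) ≠ 0 := by positivity
      have hrec : ((n:ℚ) + 1) * (Nat.choose (2*(n+1)) (n+1)) =
          2 * (2*(n:ℚ) + 1) * (Nat.choose (2*n) n) := by
        have := Nat.succ_mul_centralBinom_succ n
        rw [Nat.centralBinom, Nat.centralBinom] at this
        have := congrArg (Nat.cast : ℕ → ℚ) this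
        push_cast at this
        push_cast
        linarith
      have hb : ((Nat.choose (2*(n+1)) (n+1)) : ℚ) =
          2 * (2*(n:ℚ) + 1) * (Nat.choose (2*n) n) / ((n:ℚ) + 1) := by
        field_simp
        linarith [hrec]
      rw [hb]
      have h4 : (4:ℚ)^(n+1) = 2^(2*(n+1)) := by
        rw [pow_mul]; norm_num
      rw [h4]
      have h21 : (2*(n:ℚ) + 1) ≠ 0 := by positivity
      push_cast
      field_simp
      ring
end

section
/- For every positive integer n, ∑_{k=1}^n (4^k / C(2k,k))·k² = (1/105)·((15n² + 12n - 1)(n+1)·2^{2n+1}/C(2n,n) + 2). -/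
open Finset BigOperators

theorem stmt10 (n : ℕ) (hn : 0 < n) :
    ∑ k ∈ Finset.Icc 1 n, (4:ℚ)^k / (Nat.choose (2*k) k) * k^2 =
      (1/105) * ((15*(n:ℚ)^2+12*(n:ℚ)-1)*((n:ℚ)+1) * 2^(2*n+1) / (Nat.choose (2*n) n) + 2) := by
  induction n with
  | zero => exact absurd hn (lt_irrefl 0)
  | succ m ih =>
    rcases Nat.eq_zero_or_pos m with hm | hm
    · subst hm; norm_num
    · rw [Finset.sum_Icc_succ_top (by omega : 1 ≤ m + 1), ih hm]
      have h1 : ((Nat.choose (2*m) m : ℚ)) ≠ 0 := by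
        exact_mod_cast (Nat.choose_pos (by omega)).ne'
      have hm1 : ((m:ℚ) + 1) ≠ 0 := by positivity
      have hD : ((Nat.choose (2*(m+1)) (m+1) : ℚ)) =
          2 * (2*(m:ℚ) + 1) * (Nat.choose (2*m) m) / ((m:ℚ) + 1) := by
        rw [eq_div_iff hm1]
        have := Nat.succ_mul_centralBinom_succ m
        rw [Nat.centralBinom, Nat.centralBinom] at this
        have h := congrArg (Nat.cast (R := ℚ)) this
        push_cast at h ⊢
        linarith [h]
      have h4 : ∀ j : ℕ, (4:ℚ)^j = 2^(2*j) := by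
        intro j; rw [pow_mul]; norm_num
      rw [hD, h4]
      push_cast
      field_simp
      ring
end

section
/- For every positive integer n, ∑_{k=1}^n (4^k / C(2k,k))·k³ = (1/945)·((105n³ + 135n² + 3n - 9)(n+1)·2^{2n+1}/C(2n,n) + 18). -/
open Finset BigOperators

theorem stmt11 (n : ℕ) (hn : 0 < n) :
    ∑ k ∈ Finset.Icc 1 n, (4:ℚ)^k / (Nat.choose (2*k) k) * k^3 =
      (1/945) * ((105*(n:ℚ)^3+135*(n:ℚ)^2+3*(n:ℚ)-9)*((n:ℚ)+1) * 2^(2*n+1) / (Nat.choose (2*n) n) + 18) := by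
  induction n with
  | zero => exact absurd hn (lt_irrefl 0)
  | succ m ih =>
    rcases Nat.eq_zero_or_pos m with hm | hm
    · subst hm; norm_num
    rw [Finset.sum_Icc_succ_top (by omega), ih hm]
    have h1 : (Nat.choose (2*m) m : ℚ) ≠ 0 :=
      Nat.cast_ne_zero.mpr (Nat.choose_pos (by omega)).ne'
    have h2 : (Nat.choose (2*(m+1)) (m+1) : ℚ) ≠ 0 :=
      Nat.cast_ne_zero.mpr (Nat.choose_pos (by omega)).ne'
    have hm1 : ((m:ℚ)+1) ≠ 0 := by positivity
    have hkey : (Nat.choose (2*(m+1)) (m+1) : ℚ) = 2 * (2*(m:ℚ)+1) * (Nat.choose (2*m) m) / ((m:ℚ)+1) := by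
      rw [eq_div_iff hm1]
      have := congrArg (Nat.cast : ℕ → ℚ) (Nat.succ_mul_centralBinom_succ m)
      simp only [Nat.centralBinom] at this
      push_cast at this
      linarith [this]
    rw [hkey]
    have h4 : (4:ℚ)^(m+1) = 2^(2*(m+1)) := by
      rw [show (4:ℚ) = 2^2 by norm_num, ← pow_mul]
    rw [h4]
    push_cast
    field_simp
    ring
end

section
/- Let d, n be positive integers, U_d(n) = ∑_{k=1}^n (4^k / C(2k,k))·k^d, V_d(n) = ∑_{k=1}^n (4^k / C(2k,k))·k^d·H_k, and c_{d,j} = C(d+1,j+1) + C(d,j+1). Then (2d+3)·V_d(n) = (n+1)·2^{2n+1}·n^d·H_{n+1}/C(2n,n) - ∑_{j=1}^d (-1)^j·c_{d,j}·V_{d-j}(n) - 2·U_d(n). -/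
open Finset BigOperators

def U (d n : ℕ) : ℚ := ∑ k ∈ Finset.Icc 1 n, (4:ℚ)^k / (Nat.choose (2*k) k) * k^d

def V (d n : ℕ) : ℚ := ∑ k ∈ Finset.Icc 1 n, (4:ℚ)^k / (Nat.choose (2*k) k) * k^d * H k

def c (d j : ℕ) : ℚ := Nat.choose (d+1) (j+1) + Nat.choose d (j+1)

lemma Arec (k : ℕ) :
    (2*(k:ℚ)+1) * ((4:ℚ)^(k+1) / (Nat.choose (2*(k+1)) (k+1))) =
      2*((k:ℚ)+1) * ((4:ℚ)^k / (Nat.choose (2*k) k)) := by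
  have h := Nat.succ_mul_centralBinom_succ k
  simp only [Nat.centralBinom] at h
  have h1 : ((2*k).choose k : ℚ) ≠ 0 := by
    exact_mod_cast (Nat.choose_pos (by omega)).ne'
  have h2 : ((2*(k+1)).choose (k+1) : ℚ) ≠ 0 := by
    exact_mod_cast (Nat.choose_pos (by omega)).ne'
  have hq : ((k:ℚ)+1) * ((2*(k+1)).choose (k+1)) = 2*(2*(k:ℚ)+1) * ((2*k).choose k) := by
    exact_mod_cast congrArg (Nat.cast : ℕ → ℚ) h
  field_simp
  ring_nf
  ring_nf at hq
  linear_combination (-(2:ℚ)*4^k) * hq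

lemma binomA (d : ℕ) (x : ℚ) :
    ∑ j ∈ range (d+1), (-1:ℚ)^j * (Nat.choose d j) * x^(d-j) = (x-1)^d := by
  have h := add_pow x (-1 : ℚ) d
  rw [show x + (-1:ℚ) = x - 1 by ring] at h
  rw [h, ← Finset.sum_range_reflect]
  apply Finset.sum_congr rfl
  intro j hj
  have hjd : j ≤ d := by simpa [Nat.lt_succ_iff] using hj
  rw [show d + 1 - 1 - j = d - j from by omega, Nat.choose_symm hjd,
    show d - (d-j) = j from by omega]
  ring

lemma binomB (d : ℕ) (x : ℚ) :
    ∑ j ∈ range (d+1), (-1:ℚ)^j * (Nat.choose (d+1) (j+1)) * x^(d-j)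
      = x^(d+1) - (x-1)^(d+1) := by
  have h := binomA (d+1) x
  rw [Finset.sum_range_succ'] at h
  simp only [Nat.choose_zero_right, Nat.sub_zero, pow_zero, Nat.cast_one, one_mul, mul_one] at h
  have : ∑ j ∈ range (d+1), (-1:ℚ)^(j+1) * (Nat.choose (d+1) (j+1)) * x^(d+1-(j+1))
      = (x-1)^(d+1) - x^(d+1) := by linarith [h]
  calc ∑ j ∈ range (d+1), (-1:ℚ)^j * (Nat.choose (d+1) (j+1)) * x^(d-j)
      = -∑ j ∈ range (d+1), (-1:ℚ)^(j+1) * (Nat.choose (d+1) (j+1)) * x^(d+1-(j+1)) := by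
        rw [← Finset.sum_neg_distrib]
        apply Finset.sum_congr rfl
        intro j hj
        rw [show d+1-(j+1) = d - j from by omega]
        ring
    _ = x^(d+1) - (x-1)^(d+1) := by rw [this]; ring

lemma keyIcc (d : ℕ) (x : ℚ) :
    ∑ j ∈ Icc 1 d, (-1:ℚ)^j * c d j * x^(d-j)
      = 2*x^(d+1) - 2*(x-1)^(d+1) - (x-1)^d - (2*(d:ℚ)+1)*x^d := by
  have hall : ∑ j ∈ range (d+1), (-1:ℚ)^j * c d j * x^(d-j)
      = 2*(x^(d+1) - (x-1)^(d+1)) - (x-1)^d := by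
    have : ∀ j ∈ range (d+1), (-1:ℚ)^j * c d j * x^(d-j)
        = 2*((-1:ℚ)^j * (Nat.choose (d+1) (j+1)) * x^(d-j))
          - ((-1:ℚ)^j * (Nat.choose d j) * x^(d-j)) := by
      intro j hj
      have hc : c d j = 2 * (Nat.choose (d+1) (j+1) : ℚ) - (Nat.choose d j : ℚ) := by
        unfold c
        have := Nat.choose_succ_succ d j
        push_cast [this]
        ring
      rw [hc]; ring
    rw [Finset.sum_congr rfl this, Finset.sum_sub_distrib, ← Finset.mul_sum, binomA, binomB]
  have hsplit : ∑ j ∈ range (d+1), (-1:ℚ)^j * c d j * x^(d-j)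
      = (-1:ℚ)^0 * c d 0 * x^(d-0) + ∑ j ∈ Icc 1 d, (-1:ℚ)^j * c d j * x^(d-j) := by
    rw [Finset.sum_range_succ']
    rw [show Icc 1 d = Ico 1 (d+1) from rfl, Finset.sum_Ico_eq_sum_range]
    simp [add_comm]
  have hc0 : c d 0 = 2*(d:ℚ)+1 := by
    unfold c
    simp [Nat.choose_one_right]
    ring
  rw [hsplit, hc0] at hall
  simp only [pow_zero, one_mul, Nat.sub_zero] at hall
  linarith [hall]

lemma Hrec (k : ℕ) : H (k+1) = H k + 1/((k:ℚ)+1) := by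
  simp [H, Finset.sum_range_succ]

lemma tel (d : ℕ) (hd : 0 < d) (n : ℕ) :
    (2*(d:ℚ)+3) * V d n + (∑ j ∈ Icc 1 d, (-1:ℚ)^j * c d j * V (d-j) n) + 2 * U d n
      = 2*((n:ℚ)+1) * ((4:ℚ)^n / (Nat.choose (2*n) n)) * (n:ℚ)^d * H (n+1) := by
  induction n with
  | zero =>
    simp [U, V, zero_pow hd.ne']
  | succ n ih =>
    have h1n : 1 ≤ n + 1 := by omega
    have hV : ∀ e : ℕ, V e (n+1) = V e n
        + (4:ℚ)^(n+1) / (Nat.choose (2*(n+1)) (n+1)) * ((n:ℚ)+1)^e * H (n+1) := by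
      intro e
      rw [V, Finset.sum_Icc_succ_top h1n, ← V]
      push_cast
      ring
    have hU : U d (n+1) = U d n
        + (4:ℚ)^(n+1) / (Nat.choose (2*(n+1)) (n+1)) * ((n:ℚ)+1)^d := by
      rw [U, Finset.sum_Icc_succ_top h1n, ← U]
      push_cast
      ring
    rw [hU, hV]
    have hsum : ∑ j ∈ Icc 1 d, (-1:ℚ)^j * c d j *
        (V (d-j) n + (4:ℚ)^(n+1) / (Nat.choose (2*(n+1)) (n+1)) * ((n:ℚ)+1)^(d-j) * H (n+1))
        = (∑ j ∈ Icc 1 d, (-1:ℚ)^j * c d j * V (d-j) n)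
          + ((4:ℚ)^(n+1) / (Nat.choose (2*(n+1)) (n+1))) * H (n+1) *
            ∑ j ∈ Icc 1 d, (-1:ℚ)^j * c d j * ((n:ℚ)+1)^(d-j) := by
      rw [Finset.mul_sum, ← Finset.sum_add_distrib]
      exact Finset.sum_congr rfl fun j _ => by ring
    rw [Finset.sum_congr rfl (fun j _ => congrArg (fun z => (-1:ℚ)^j * c d j * z) (hV (d-j))),
      hsum, keyIcc d ((n:ℚ)+1)]
    have harec := Arec n
    have hhrec : ((n:ℚ)+2) * H (n+1+1) = ((n:ℚ)+2) * H (n+1) + 1 := by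
      rw [Hrec (n+1)]
      have h2 : ((n:ℚ)+1+1) ≠ 0 := by positivity
      push_cast
      field_simp
      ring
    push_cast
    linear_combination ih - ((n:ℚ)^d * H (n+1)) * harec
      - (2 * ((4:ℚ)^(n+1) / (Nat.choose (2*(n+1)) (n+1))) * ((n:ℚ)+1)^d) * hhrec

theorem stmt13 (d n : ℕ) (hd : 0 < d) (hn : 0 < n) :
    (2*(d:ℚ)+3) * V d n =
      ((n:ℚ)+1) * 2^(2*n+1) * (n:ℚ)^d * H (n+1) / (Nat.choose (2*n) n)
        - ∑ j ∈ Finset.Icc 1 d, (-1:ℚ)^j * c d j * V (d-j) n - 2 * U d n := by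
  have h2 : ((2:ℚ))^(2*n+1) = 2*4^n := by
    rw [pow_succ, pow_mul]
    norm_num
    ring
  rw [h2]
  linear_combination tel d hd n
end

section
/- For every positive integer n, ∑_{k=1}^n (4^k / C(2k,k))·k²·H_k = (n+1)(15n² + 12n - 1)·2^{2n+1}·H_n/(105·C(2n,n)) - (450n³ - 261n² - 328n + 173)·2^{2n+1}/(11025·C(2n,n)) + 346/11025. -/
open Finset BigOperators

lemma key (n : ℕ) :
    ((n:ℚ)+1) * (Nat.choose (2*(n+1)) (n+1)) = 2*(2*(n:ℚ)+1) * Nat.choose (2*n) n := by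
  have h := Nat.succ_mul_centralBinom_succ n
  have : (((n+1) * Nat.centralBinom (n+1) : ℕ) : ℚ) = ((2 * (2*n+1) * Nat.centralBinom n : ℕ) : ℚ) := by
    exact_mod_cast h
  simp only [Nat.centralBinom] at this
  push_cast at this
  linarith

lemma cne (n : ℕ) : ((Nat.choose (2*n) n : ℚ)) ≠ 0 := by
  have := Nat.centralBinom_pos n
  simp [Nat.centralBinom] at this
  positivity

theorem stmt15 (n : ℕ) (hn : 0 < n) :
    ∑ k ∈ Finset.Icc 1 n, (4:ℚ)^k / (Nat.choose (2*k) k) * k^2 * H k =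
      ((n:ℚ)+1)*(15*(n:ℚ)^2 + 12*(n:ℚ) - 1) * 2^(2*n+1) * H n / (105 * (Nat.choose (2*n) n))
        - (450*(n:ℚ)^3 - 261*(n:ℚ)^2 - 328*(n:ℚ) + 173) * 2^(2*n+1) / (11025 * (Nat.choose (2*n) n)) + 346/11025 := by
  induction n with
  | zero => omega
  | succ m ih =>
    rcases Nat.eq_zero_or_pos m with hm | hm
    · subst hm
      norm_num [H, Finset.sum_range_succ]
    · have hsum := ih hm
      rw [Finset.sum_Icc_succ_top (by omega : 1 ≤ m+1), hsum]
      have hH : H (m+1) = H m + 1/((m:ℚ)+1) := by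
        simp [H, Finset.sum_range_succ]
      have hk := key m
      have hc := cne m
      have hc' := cne (m+1)
      have hm1 : ((m:ℚ)+1) ≠ 0 := by positivity
      have hchoose : ((Nat.choose (2*(m+1)) (m+1) : ℚ)) = 2*(2*(m:ℚ)+1) * Nat.choose (2*m) m / ((m:ℚ)+1) := by
        field_simp
        linarith [hk]
      rw [hH, hchoose]
      have h21 : (2*(m:ℚ)+1) ≠ 0 := by positivity
      have h4 : (4:ℚ)^(m+1) = 2^(2*m+2) := by
        rw [show (4:ℚ) = 2^2 by norm_num, ← pow_mul]; ring_nf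
      rw [h4, show 2*(m+1)+1 = 2*m+3 from by ring]
      rw [show (2:ℚ)^(2*m+2) = 2^(2*m+1)*2 from by rw [pow_succ],
          show (2:ℚ)^(2*m+3) = 2^(2*m+1)*4 from by rw [show 2*m+3=(2*m+1)+2 from by ring, pow_add]; norm_num]
      push_cast
      field_simp
      ring
end

section
/- For all integers n ≥ 1, ∑_{k=1}^n (4^{-k}/(2k-1))·C(2k,k)/C(n+k,k)·H_{n+k} = (1/(2n+1))·(H_n + 2/(2n+1)) - (4^{-n}/(2n+1))·(H_{2n} + 2/(2n+1)). -/
open Finset BigOperators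

def bb (n k : ℕ) : ℚ :=
  ((4:ℚ)^k)⁻¹ / (2*(k:ℚ)-1) * (Nat.choose (2*k) k) / (Nat.choose (n+k) k)

def AA (n k : ℕ) : ℚ := -2*((k:ℚ)+n)/(2*(n:ℚ)+1) * bb n k

def gg (n k : ℕ) : ℚ := AA n k * H (n+k) + 2/(2*(n:ℚ)+1) * (AA n k + bb n k)

lemma cb_succ (k : ℕ) :
    ((Nat.choose (2*(k+1)) (k+1) : ℕ) : ℚ) * ((k:ℚ)+1) = 2*(2*(k:ℚ)+1) * (Nat.choose (2*k) k) := by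
  have h := Nat.succ_mul_centralBinom_succ k
  simp only [Nat.centralBinom] at h
  have : (((k+1) * Nat.choose (2*(k+1)) (k+1) : ℕ) : ℚ) = ((2 * (2*k+1) * Nat.choose (2*k) k : ℕ) : ℚ) := by
    exact_mod_cast congrArg (Nat.cast : ℕ → ℚ) h
  push_cast at this
  linarith

lemma ch_succ (n k : ℕ) :
    ((Nat.choose (n+(k+1)) (k+1) : ℕ) : ℚ) * ((k:ℚ)+1) = (Nat.choose (n+k) k) * ((n:ℚ)+k+1) := by
  have h := Nat.add_one_mul_choose_eq (n+k) k
  have : (((n+k+1) * Nat.choose (n+k) k : ℕ) : ℚ) = ((Nat.choose (n+k+1) (k+1) * (k+1) : ℕ) : ℚ) := by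
    exact_mod_cast congrArg (Nat.cast : ℕ → ℚ) h
  push_cast at this
  have e : n + (k+1) = n + k + 1 := by ring
  rw [e]
  linarith

lemma bb_succ (n k : ℕ) :
    bb n (k+1) = (Nat.choose (2*k) k : ℚ) / (2*(4:ℚ)^k*((n:ℚ)+k+1)*(Nat.choose (n+k) k)) := by
  have hy : ((Nat.choose (n+k) k : ℕ) : ℚ) ≠ 0 := by
    exact_mod_cast (Nat.choose_pos (by omega : k ≤ n+k)).ne'
  have hk0 : ((k:ℚ)+1) ≠ 0 := by positivity
  have hd2 : (2*(k:ℚ)+1) ≠ 0 := by positivity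
  have hd2' : (2*((k:ℚ)+1)-1) ≠ 0 := by
    have : (2*((k:ℚ)+1)-1) = 2*(k:ℚ)+1 := by ring
    rw [this]; exact hd2
  have hd3 : ((n:ℚ)+k+1) ≠ 0 := by positivity
  have hp : ((4:ℚ)^k) ≠ 0 := by positivity
  have e1 : ((Nat.choose (2*(k+1)) (k+1) : ℕ) : ℚ) = 2*(2*(k:ℚ)+1) * (Nat.choose (2*k) k) / ((k:ℚ)+1) := by
    rw [eq_div_iff hk0]; exact cb_succ k
  have e2 : ((Nat.choose (n+(k+1)) (k+1) : ℕ) : ℚ) = (Nat.choose (n+k) k) * ((n:ℚ)+k+1) / ((k:ℚ)+1) := by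
    rw [eq_div_iff hk0]; exact ch_succ n k
  rw [bb, e1, e2, pow_succ]
  push_cast
  field_simp
  ring

set_option maxHeartbeats 1000000 in
lemma step (n k : ℕ) (hk : 1 ≤ k) :
    gg n (k+1) - gg n k = bb n k * H (n+k) := by
  have hk1 : (1:ℚ) ≤ (k:ℚ) := by exact_mod_cast hk
  have hy : ((Nat.choose (n+k) k : ℕ) : ℚ) ≠ 0 := by
    exact_mod_cast (Nat.choose_pos (by omega : k ≤ n+k)).ne'
  have hd1 : (2*(k:ℚ)-1) ≠ 0 := by intro h; nlinarith
  have hd3 : ((n:ℚ)+k+1) ≠ 0 := by positivity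
  have hd4 : (2*(n:ℚ)+1) ≠ 0 := by positivity
  have hp : ((4:ℚ)^k) ≠ 0 := by positivity
  have hH : H (n+(k+1)) = H (n+k) + 1/((n:ℚ)+k+1) := by
    have : n+(k+1) = (n+k)+1 := by ring
    rw [this, H_succ]; push_cast; ring
  simp only [gg, AA, hH, bb_succ]
  rw [bb]
  push_cast
  field_simp
  ring

lemma bb_one (n : ℕ) : bb n 1 = 1/(2*((n:ℚ)+1)) := by
  have hn0 : ((n:ℚ)+1) ≠ 0 := by positivity
  rw [bb]
  simp [Nat.choose_one_right]
  field_simp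
  ring

lemma bb_top (n : ℕ) : bb n (n+1) = 1/(2*(4:ℚ)^n*(2*(n:ℚ)+1)) := by
  have hz : ((Nat.choose (2*n) n : ℕ) : ℚ) ≠ 0 := by
    exact_mod_cast (Nat.choose_pos (by omega : n ≤ 2*n)).ne'
  have hd3 : ((n:ℚ)+n+1) ≠ 0 := by positivity
  have hd4 : (2*(n:ℚ)+1) ≠ 0 := by positivity
  have hp : ((4:ℚ)^n) ≠ 0 := by positivity
  rw [bb_succ, show n + n = 2*n from by ring]
  field_simp
  ring

set_option maxHeartbeats 1000000 in
lemma endpoint (n : ℕ) :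
    gg n (n+1) - gg n 1 =
      (1/(2*(n:ℚ)+1)) * (H n + 2/(2*(n:ℚ)+1))
        - ((4:ℚ)^n)⁻¹ / (2*(n:ℚ)+1) * (H (2*n) + 2/(2*(n:ℚ)+1)) := by
  have hn0 : ((n:ℚ)+1) ≠ 0 := by positivity
  have hd4 : (2*(n:ℚ)+1) ≠ 0 := by positivity
  have hp : ((4:ℚ)^n) ≠ 0 := by positivity
  have hH1 : H (n+(n+1)) = H (2*n) + 1/(2*(n:ℚ)+1) := by
    have : n+(n+1) = (2*n)+1 := by ring
    rw [this, H_succ]; push_cast; ring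
  have hH2 : H (n+1) = H n + 1/((n:ℚ)+1) := by
    rw [H_succ]
  simp only [gg, AA, hH1, hH2, bb_top, bb_one]
  push_cast
  field_simp
  ring

theorem stmt17 (n : ℕ) (hn : 1 ≤ n) :
    ∑ k ∈ Finset.Icc 1 n, ((4:ℚ)^k)⁻¹ / (2*(k:ℚ)-1) * (Nat.choose (2*k) k) / (Nat.choose (n+k) k) * H (n+k) =
      (1/(2*(n:ℚ)+1)) * (H n + 2/(2*(n:ℚ)+1))
        - ((4:ℚ)^n)⁻¹ / (2*(n:ℚ)+1) * (H (2*n) + 2/(2*(n:ℚ)+1)) := by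
  have key : ∑ k ∈ Finset.Icc 1 n, bb n k * H (n+k) = gg n (n+1) - gg n 1 := by
    rw [← Finset.Ico_add_one_right_eq_Icc, Finset.sum_Ico_eq_sum_range]
    have hc : ∀ i ∈ Finset.range (n+1-1), bb n (1+i) * H (n+(1+i)) =
        gg n ((i+1)+1) - gg n (i+1) := by
      intro i _
      rw [show 1+i = i+1 from by ring]
      exact (step n (i+1) (by omega)).symm
    rw [Finset.sum_congr rfl hc]
    have ht := Finset.sum_range_sub (fun i => gg n (i+1)) (n+1-1)
    rw [ht, show n+1-1 = n from by omega]
  rw [← endpoint n, ← key]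
  rfl
end

section
/- For all integers n ≥ 1, ∑_{k=1}^n (4^k / C(2k,k))·H_k^{(2)} = 4/3 + (2^{2n+1}/(3·C(2n,n)))·((n+1)·H_n^{(2)} - 2) + (1/3)·∑_{k=1}^n 4^k/(k²·C(2k,k)). -/
open Finset BigOperators

def H2 (n : ℕ) : ℚ := ∑ j ∈ Finset.range n, 1/((j:ℚ)+1)^2

theorem stmt18 (n : ℕ) (hn : 1 ≤ n) :
    ∑ k ∈ Finset.Icc 1 n, (4:ℚ)^k / (Nat.choose (2*k) k) * H2 k =
      4/3 + (2^(2*n+1) / (3 * (Nat.choose (2*n) n))) * (((n:ℚ)+1) * H2 n - 2)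
        + (1/3) * ∑ k ∈ Finset.Icc 1 n, (4:ℚ)^k / ((k:ℚ)^2 * (Nat.choose (2*k) k)) := by
  induction n, hn using Nat.le_induction with
  | base =>
    simp [H2, Finset.sum_range_succ]
    norm_num
  | succ n hn ih =>
    rw [Finset.sum_Icc_succ_top (by omega), Finset.sum_Icc_succ_top (by omega), ih]
    have hH : H2 (n+1) = H2 n + 1/((n:ℚ)+1)^2 := by
      simp [H2, Finset.sum_range_succ]
    have hcpos : 0 < (2*n).choose n := Nat.choose_pos (by omega)
    have hc : ((2*n).choose n : ℚ) ≠ 0 := by exact_mod_cast hcpos.ne'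
    have hn1 : ((n:ℚ)+1) ≠ 0 := by positivity
    have key : ((2*(n+1)).choose (n+1) : ℚ)
        = 2*(2*(n:ℚ)+1) * ((2*n).choose n) / ((n:ℚ)+1) := by
      have h := Nat.succ_mul_centralBinom_succ n
      simp only [Nat.centralBinom] at h
      have h' : ((n:ℚ)+1) * ((2*(n+1)).choose (n+1)) = 2*(2*(n:ℚ)+1) * ((2*n).choose n) := by
        exact_mod_cast h
      field_simp
      linarith [h']
    have p1 : (2:ℚ)^(2*n+1) = 2 * 4^n := by
      rw [pow_succ, pow_mul]; norm_num [mul_comm]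
    have p2 : (2:ℚ)^(2*(n+1)+1) = 8 * 4^n := by
      have : 2*(n+1)+1 = 2*n+3 := by ring
      rw [this, pow_add, pow_mul]; norm_num [mul_comm]
    rw [hH, key, p1, p2]
    push_cast
    field_simp
    ring
end
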